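/- arXiv:1311.1024 — 2 statements merged into one kernel-verified Lean document; each statement's English description precedes it below -/
import Mathlib

section
/- If the set {1, a₂, a₃} (1 < a₂ < a₃) is both an n-stride generator SG(n,p) and an n′-stride generator SG(n′,p′) with n′ < n, then p′ > p + 1. -/
def SGRep (n a₂ a₃ x i : ℕ) : Prop :=
  ∃ c₁ c₂ : ℕ, x + i * a₃ = c₂ * a₂ + c₁ ∧ c₂ + c₁ ≤ n + i

def SGBreakRep (n a₂ a₃ y j : ℕ) : Prop :=
  ∃ c₁ c₂ : ℕ, y + j * a₃ = c₂ * a₂ + c₁ ∧ c₂ + c₁ ≤ n + j - 1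

def IsSG (n p a₂ a₃ : ℕ) : Prop :=
  (∀ x : ℕ, 0 < x → x < a₃ → ∃ i ≤ p, SGRep n a₂ a₃ x i) ∧
  (∃ x : ℕ, 0 < x ∧ x < a₃ ∧ SGRep n a₂ a₃ x p ∧ ∀ i < p, ¬ SGRep n a₂ a₃ x i) ∧
  (∃ y : ℕ, 0 < y ∧ y < a₃ ∧ ∀ j ≤ p + 1, ¬ SGBreakRep n a₂ a₃ y j)

theorem SGRep.sgBreakRep_of_lt {n n' a₂ a₃ x i : ℕ} (h : SGRep n' a₂ a₃ x i) (hlt : n' < n) :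
    SGBreakRep n a₂ a₃ x i := by
  obtain ⟨c₁, c₂, heq, hle⟩ := h
  exact ⟨c₁, c₂, heq, by omega⟩

theorem stmt6_general (a₂ a₃ n n' p p' : ℕ)
    (hlt : n' < n)
    (h1 : IsSG n p a₂ a₃) (h2 : IsSG n' p' a₂ a₃) :
    p + 1 < p' := by
  obtain ⟨y, hy0, hya, hy⟩ := h1.2.2
  obtain ⟨i, hip, hrep⟩ := h2.1 y hy0 hya
  by_contra! hp'
  exact hy i (hip.trans hp') (hrep.sgBreakRep_of_lt hlt)

theorem stmt6 (a₂ a₃ n n' p p' : ℕ) (ha₂ : 1 < a₂) (ha₃ : a₂ < a₃)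
    (hn' : 1 ≤ n') (hlt : n' < n)
    (h1 : IsSG n p a₂ a₃) (h2 : IsSG n' p' a₂ a₃) :
    p + 1 < p' :=
  stmt6_general a₂ a₃ n n' p p' hlt h1 h2
end

section
/- Every order-0 stride generator is canonical: if {1, a₂, a₃} (1 < a₂ < a₃) is an n-stride generator SG(n, 0) of order 0, then every break of SG(n, 0) is canonical. -/
def IsBreak (n p a₂ a₃ y : ℕ) : Prop :=
  0 < y ∧ y < a₃ ∧ ∀ j ≤ p + 1, ¬ SGBreakRep n a₂ a₃ y j

def CanonicalBreak (n a₂ a₃ y : ℕ) : Prop :=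
  ∀ j : ℕ, ¬ SGBreakRep n a₂ a₃ y j

def minWeight (a m : ℕ) : ℕ := m / a + m % a

theorem minWeight_mul_add {a r : ℕ} (q : ℕ) (hr : r < a) : minWeight a (a * q + r) = q + r := by
  have ha : 0 < a := by omega
  rw [minWeight, Nat.mul_add_div ha, Nat.div_eq_of_lt hr, Nat.mul_add_mod, Nat.mod_eq_of_lt hr,
    Nat.add_zero]

theorem minWeight_le_of_eq {a m c₁ c₂ : ℕ} (h : m = c₂ * a + c₁) :
    minWeight a m ≤ c₂ + c₁ := by
  rcases Nat.eq_zero_or_pos a with rfl | ha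
  · simp [minWeight, h]
  have hc₂ : c₂ ≤ m / a := (Nat.le_div_iff_mul_le ha).mpr (by omega)
  obtain ⟨k, hk⟩ := Nat.exists_eq_add_of_le hc₂
  have hdm := Nat.div_add_mod m a
  rw [hk, Nat.mul_add, Nat.mul_comm a c₂] at hdm
  have : k ≤ a * k := Nat.le_mul_of_pos_left k ha
  simp only [minWeight, hk]
  omega

theorem exists_add_le_iff_minWeight_le {a m N : ℕ} :
    (∃ c₁ c₂ : ℕ, m = c₂ * a + c₁ ∧ c₂ + c₁ ≤ N) ↔ minWeight a m ≤ N := by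
  refine ⟨fun ⟨c₁, c₂, h, hN⟩ => (minWeight_le_of_eq h).trans hN, fun h => ?_⟩
  exact ⟨m % a, m / a, by rw [Nat.mul_comm, Nat.div_add_mod], h⟩

theorem minWeight_add_of_mod_add_mod_lt {a m d : ℕ} (h : m % a + d % a < a) :
    minWeight a (m + d) = minWeight a m + minWeight a d := by
  simp only [minWeight, Nat.add_div_eq_of_add_mod_lt h, Nat.add_mod_of_add_mod_lt h]
  ring

theorem minWeight_add_add_pred_of_le_mod_add_mod {a m d : ℕ} (ha : 0 < a)
    (h : a ≤ m % a + d % a) :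
    minWeight a (m + d) + (a - 1) = minWeight a m + minWeight a d := by
  have hdiv := Nat.add_div_eq_of_le_mod_add_mod h ha
  have hmod := Nat.add_mod_add_of_le_add_mod h
  simp only [minWeight]
  omega

theorem minWeight_add_le {a : ℕ} (ha : 0 < a) (m d : ℕ) :
    minWeight a m + minWeight a d ≤ minWeight a (m + d) + (a - 1) := by
  rcases lt_or_ge (m % a + d % a) a with h | h
  · rw [minWeight_add_of_mod_add_mod_lt h]
    omega
  · rw [minWeight_add_add_pred_of_le_mod_add_mod ha h]

theorem minWeight_lt_minWeight_add_of_le {a d : ℕ} (ha : 0 < a) (hd : a ≤ minWeight a d)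
    (m : ℕ) : minWeight a m < minWeight a (m + d) := by
  have := minWeight_add_le ha m d
  omega

theorem minWeight_lt_minWeight_add_of_dvd {a d : ℕ} (ha : 0 < a) (hd : 0 < d) (had : a ∣ d)
    (m : ℕ) : minWeight a m < minWeight a (m + d) := by
  have hmod : d % a = 0 := Nat.mod_eq_zero_of_dvd had
  have hdiv : 0 < d / a := Nat.div_pos (Nat.le_of_dvd hd had) ha
  rw [minWeight_add_of_mod_add_mod_lt (by rw [hmod]; exact Nat.mod_lt m ha)]
  simp only [minWeight, hmod]
  omega

theorem add_le_minWeight_add_mul {a d : ℕ}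
    (hstep : ∀ m, minWeight a m < minWeight a (m + d)) (m j : ℕ) :
    minWeight a m + j ≤ minWeight a (m + j * d) := by
  induction j with
  | zero => simp
  | succ j ih =>
    have := hstep (m + j * d)
    rw [Nat.succ_mul, ← Nat.add_assoc m]
    omega

theorem mod_eq_pred_of_forall_minWeight_le {a d y : ℕ} (ha : 1 < a) (had : a < d)
    (hwd : minWeight a d < a) (hy : y < d)
    (hmax : ∀ x, 0 < x → x < d → minWeight a x ≤ minWeight a y) : y % a = a - 1 := by
  obtain ⟨q, hq⟩ : ∃ q, d / a = q + 1 :=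
    Nat.exists_eq_add_one.mpr (Nat.div_pos had.le (by omega))
  have hd := Nat.div_add_mod d a
  have hy' := Nat.div_add_mod y a
  rw [hq, Nat.mul_add, Nat.mul_one] at hd
  have hwx : minWeight a (a * q + (a - 1)) = q + (a - 1) := minWeight_mul_add q (by omega)
  have hx := hmax (a * q + (a - 1)) (by omega) (by omega)
  have hQ : y / a ≤ q + 1 := hq ▸ Nat.div_le_div_right hy.le
  have hR : y % a < a := Nat.mod_lt y (by omega)
  simp only [minWeight, hq] at hwx hx hwd
  rcases hQ.lt_or_eq with hQ | hQ
  · omega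
  · rw [hQ, Nat.mul_add, Nat.mul_one] at hy'
    omega

theorem dvd_of_forall_minWeight_le {a d y : ℕ} (ha : 1 < a) (had : a < d)
    (hwd : minWeight a d < a) (hy : y < d)
    (hmax : ∀ x, 0 < x → x < d → minWeight a x ≤ minWeight a y)
    (hgrow : minWeight a y < minWeight a (y + d)) : a ∣ d := by
  have hR := mod_eq_pred_of_forall_minWeight_le ha had hwd hy hmax
  refine Nat.dvd_of_mod_eq_zero (Nat.eq_zero_of_not_pos fun hr => ?_)
  have := minWeight_add_add_pred_of_le_mod_add_mod (a := a) (m := y) (d := d)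
    (by omega) (by omega)
  omega

theorem sgRep_iff {n a₂ a₃ x i : ℕ} :
    SGRep n a₂ a₃ x i ↔ minWeight a₂ (x + i * a₃) ≤ n + i :=
  exists_add_le_iff_minWeight_le

theorem sgBreakRep_iff {n a₂ a₃ y j : ℕ} :
    SGBreakRep n a₂ a₃ y j ↔ minWeight a₂ (y + j * a₃) ≤ n + j - 1 :=
  exists_add_le_iff_minWeight_le

theorem stmt9_general (n a₂ a₃ : ℕ) (ha₂ : 1 < a₂) (ha₃ : a₂ < a₃)
    (hsg : IsSG n 0 a₂ a₃) :
    ∀ y : ℕ, IsBreak n 0 a₂ a₃ y → CanonicalBreak n a₂ a₃ y := by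
  rintro y ⟨hy0, hy, hbreak⟩ j hrep
  have hle : ∀ x, 0 < x → x < a₃ → minWeight a₂ x ≤ n := fun x hx0 hx => by
    obtain ⟨i, hi, hrep⟩ := hsg.1 x hx0 hx
    obtain rfl : i = 0 := Nat.le_zero.mp hi
    simpa [sgRep_iff] using hrep
  have h0 := hbreak 0 (Nat.zero_le _)
  have h1 := hbreak 1 le_rfl
  simp only [sgBreakRep_iff, zero_mul, one_mul, add_zero] at h0 h1 hrep
  have hwy : minWeight a₂ y = n := le_antisymm (hle y hy0 hy) (by omega)
  have hstep : ∀ m, minWeight a₂ m < minWeight a₂ (m + a₃) := by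
    rcases le_or_gt a₂ (minWeight a₂ a₃) with hw | hw
    · exact minWeight_lt_minWeight_add_of_le (by omega) hw
    · refine minWeight_lt_minWeight_add_of_dvd (by omega) (by omega) ?_
      exact dvd_of_forall_minWeight_le ha₂ ha₃ hw hy
        (fun x hx0 hx => (hle x hx0 hx).trans (by omega)) (by omega)
  have := add_le_minWeight_add_mul hstep y j
  omega

theorem stmt9 (n a₂ a₃ : ℕ) (hn : 1 ≤ n) (ha₂ : 1 < a₂) (ha₃ : a₂ < a₃)
    (hsg : IsSG n 0 a₂ a₃) :
    ∀ y : ℕ, IsBreak n 0 a₂ a₃ y → CanonicalBreak n a₂ a₃ y :=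
  stmt9_general n a₂ a₃ ha₂ ha₃ hsg
end
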